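/- arXiv:2405.09242 — 2 statements merged into one kernel-verified Lean document; each statement's English description precedes it below -/
import Mathlib

section
/- Each hop equivalence class in S_n under valley hopping contains exactly one permutation with no double descent and no initial descent (the canonical representative obtained by placing all free letters on upslopes); consequently S_n is the disjoint union of the classes Hop(w) over w ∈ S̃_n. -/
open Finset Polynomial

open scoped Classical

noncomputable section

/-- The letter (0-based) at 0-based position `i` in the one-line notation of `w`
(junk value `0` out of range). -/
def ol (n : ℕ) (w : Equiv.Perm (Fin n)) (i : ℕ) : ℕ :=
  if h : i < n then (w ⟨i, h⟩ : ℕ) else 0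

/-- The descent set of `w`, with 0-based positions: `i ∈ DesSet n w` (for `i ≤ n-2`)
means `w(i) > w(i+1)`.  (This is the paper's descent `i+1 ∈ [n-1]`.) -/
def DesSet (n : ℕ) (w : Equiv.Perm (Fin n)) : Finset ℕ :=
  (Finset.range (n - 1)).filter fun i => ol n w (i + 1) < ol n w i

/-- The number of descents of `w`. -/
def des (n : ℕ) (w : Equiv.Perm (Fin n)) : ℕ := (DesSet n w).card

/-- `w` has no double descent: no two consecutive descent positions. -/
def NoDoubleDescent (n : ℕ) (w : Equiv.Perm (Fin n)) : Prop :=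
  ∀ i ∈ DesSet n w, i + 1 ∉ DesSet n w

/-- `w` has no initial descent (no descent at the first position). -/
def NoInitialDescent (n : ℕ) (w : Equiv.Perm (Fin n)) : Prop := 0 ∉ DesSet n w

/-- `w` has no final descent (no descent at the last position, paper's `n-1`). -/
def NoFinalDescent (n : ℕ) (w : Equiv.Perm (Fin n)) : Prop := n - 2 ∉ DesSet n w

/-- The involution `w ↦ w*`, `w*(i) = n+1-w(n+1-i)` in 1-based notation. -/
def starPerm (n : ℕ) (w : Equiv.Perm (Fin n)) : Equiv.Perm (Fin n) :=
  (Fin.revPerm.trans w).trans Fin.revPerm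

/-- The letter at 1-based position `i ∈ [1,n]` of `w`, as an element of `ℕ∞`,
with the boundary convention `w(0) = w(n+1) = ⊤`. -/
def olb (n : ℕ) (w : Equiv.Perm (Fin n)) (i : ℕ) : ℕ∞ :=
  if h : 1 ≤ i ∧ i ≤ n then ((w ⟨i - 1, by omega⟩ : ℕ) : ℕ∞) else ⊤

/-- 1-based position `i` is a peak of `w` : `w(i-1) < w(i) > w(i+1)` (boundaries `⊤`,
so positions `1` and `n` are never peaks). -/
def IsPeak (n : ℕ) (w : Equiv.Perm (Fin n)) (i : ℕ) : Prop :=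
  olb n w (i - 1) < olb n w i ∧ olb n w (i + 1) < olb n w i

/-- 1-based position `i` is a valley of `w` : `w(i-1) > w(i) < w(i+1)`. -/
def IsValley (n : ℕ) (w : Equiv.Perm (Fin n)) (i : ℕ) : Prop :=
  olb n w i < olb n w (i - 1) ∧ olb n w i < olb n w (i + 1)

/-- 1-based position `i` holds a free letter of `w` : neither a peak nor a valley. -/
def IsFree (n : ℕ) (w : Equiv.Perm (Fin n)) (i : ℕ) : Prop :=
  ¬ IsPeak n w i ∧ ¬ IsValley n w i

/-- The number of peaks of `w`. -/
def pk (n : ℕ) (w : Equiv.Perm (Fin n)) : ℕ :=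
  ((Finset.Icc 1 n).filter (IsPeak n w)).card

/-- The number of inversions of `w`, i.e. its Coxeter length. -/
def invNum (n : ℕ) (w : Equiv.Perm (Fin n)) : ℕ :=
  (Finset.univ.filter fun p : Fin n × Fin n => p.1 < p.2 ∧ w p.2 < w p.1).card

/-- The standard parabolic subgroup `W_K` of `S_n` generated by the adjacent
transpositions `(k, k+1)` (1-based letters `k ∈ K`, i.e. 0-based `k-1`, `k`). -/
def WK (n : ℕ) (K : Finset ℕ) : Subgroup (Equiv.Perm (Fin n)) :=
  Subgroup.closure { s | ∃ k ∈ K, ∃ hk : k < n,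
    s = Equiv.swap (⟨k - 1, lt_of_le_of_lt (Nat.sub_le k 1) hk⟩ : Fin n) ⟨k, hk⟩ }

/-- The set `W^K` of permutations in which, for every `k ∈ K`, the letter `k`
appears before the letter `k+1` (1-based letters; these are the minimal-length
coset representatives of `W_K`). -/
def WKreps (n : ℕ) (K : Finset ℕ) : Finset (Equiv.Perm (Fin n)) :=
  Finset.univ.filter fun w => ∀ k ∈ K, ∀ hk : k < n,
    w⁻¹ (⟨k - 1, lt_of_le_of_lt (Nat.sub_le k 1) hk⟩ : Fin n) < w⁻¹ ⟨k, hk⟩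

/-- The set `W(K) = { v ∈ S_n : v⁻¹(k) − v⁻¹(k+1) ≤ 1 for all k ∈ K }`
(1-based letters `k`, `k+1`). -/
def Wset (n : ℕ) (K : Finset ℕ) : Finset (Equiv.Perm (Fin n)) :=
  Finset.univ.filter fun v => ∀ k ∈ K, ∀ hk : k < n,
    ((v⁻¹ (⟨k - 1, lt_of_le_of_lt (Nat.sub_le k 1) hk⟩ : Fin n) : Fin n) : ℕ) ≤
      ((v⁻¹ (⟨k, hk⟩ : Fin n) : Fin n) : ℕ) + 1

/-- The orbit of `i` under the action of `W_K` on positions/letters. -/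
def orbitFinset (n : ℕ) (K : Finset ℕ) (i : Fin n) : Finset (Fin n) :=
  Finset.univ.filter fun j => ∃ u ∈ WK n K, u i = j

/-- The set of orbits of `W_K` on `[n]`. -/
def orbitsFinset (n : ℕ) (K : Finset ℕ) : Finset (Finset (Fin n)) :=
  Finset.univ.image (orbitFinset n K)

/-- The one-line notation of `w` as a list of (0-based) letters. -/
def word (n : ℕ) (w : Equiv.Perm (Fin n)) : List ℕ := List.ofFn fun i => (w i : ℕ)

/-- A single valley hop of the free letter `j` from a downslope (in `v`) to the
nearest upslope of the same height (giving `u`): `j` moves rightwards directly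
across the adjacent valley `B`. -/
def hopStep (v u : List ℕ) : Prop :=
  ∃ (A B C : List ℕ) (j : ℕ), B ≠ [] ∧ (∀ x ∈ B, x < j) ∧
    (∀ x ∈ A.getLast?, j < x) ∧ (∀ x ∈ C.head?, j < x) ∧
    v = A ++ j :: (B ++ C) ∧ u = A ++ (B ++ j :: C)

/-- Hop equivalence (valley hopping) on `S_n`: the equivalence closure of single
hops of free letters. -/
def hopEquiv (n : ℕ) (a b : Equiv.Perm (Fin n)) : Prop :=
  Relation.EqvGen (fun x y : Equiv.Perm (Fin n) => hopStep (word n x) (word n y)) a b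

/-- The index (1-based) of the `W_K`-orbit containing the letter `x ∈ [1,n]`:
orbits are consecutive intervals, numbered from the left. -/
def orbIdx (K : Finset ℕ) (x : ℕ) : ℕ :=
  1 + ((Finset.Icc 1 (x - 1)).filter fun t => t ∉ K).card

/-- The (0-based) descent set of a word `v` of length `n`. -/
def wdes (n : ℕ) (v : Fin n → ℕ) : Finset ℕ :=
  (Finset.range (n - 1)).filter fun i =>
    if h : i + 1 < n then v ⟨i + 1, h⟩ < v ⟨i, by omega⟩ else False

/-- The word `v` has content `μ(K)`: for each `i`, the number of letters of `v`
equal to `i` is the size of the `i`-th orbit of `W_K` on `[1,n]`. -/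
def HasContent (n : ℕ) (K : Finset ℕ) (v : Fin n → ℕ) : Prop :=
  ∀ i : ℕ, (Finset.univ.filter fun j => v j = i).card =
    ((Finset.Icc 1 n).filter fun x => orbIdx K x = i).card

/-- `w` is the standardization `φ(v)` of the word `v`: `w` orders positions by
letter value, breaking ties from left to right.  (This is exactly the map `φ`
of the paper: if `j` is the `k`-th smallest position with `v(j) = i`, then
`φ(v)(j) = k + μ₁ + ⋯ + μ_{i-1}`.) -/
def IsStd (n : ℕ) (v : Fin n → ℕ) (w : Equiv.Perm (Fin n)) : Prop :=
  ∀ j j' : Fin n, w j < w j' ↔ (v j < v j' ∨ (v j = v j' ∧ j < j'))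

/-! A hop moves a free letter `j` rightwards across the run of smaller letters that follows it,
so the one-line word decreases lexicographically and hopping terminates. Two hops of one word
either agree or are joined by one further hop each: either the two letters are far apart and
the hops commute, or the second letter lies in the run of the first and hops inside it. Hence
hopping is confluent and each hop class has exactly one word admitting no hop. A hop is
possible exactly at a descent top that is first or preceded by a larger letter, i.e. exactly
when there is an initial or a double descent. -/

namespace Relation

variable {α : Type*} {r : α → α → Prop}

theorem ReflTransGen.eq_of_forall_not {a b : α} (ha : ∀ c, ¬ r a c)
    (h : ReflTransGen r a b) : a = b :=
  h.cases_head.resolve_right fun ⟨c, hac, _⟩ => ha c hac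

theorem existsUnique_eqvGen_normal (hwf : WellFounded (flip r))
    (hconf : ∀ a b c, r a b → r a c → ∃ d, ReflGen r b d ∧ ReflTransGen r c d) (a : α) :
    ∃! b, EqvGen r a b ∧ ∀ c, ¬ r b c := by
  obtain ⟨b, hab, hmin⟩ := hwf.has_min {b | ReflTransGen r a b} ⟨a, .refl⟩
  have hb : ∀ c, ¬ r b c := fun c hbc => hmin c (hab.tail hbc) hbc
  refine ⟨b, ⟨EqvGen.reflTransGen_le_eqvGen r _ _ hab, hb⟩, fun b' ⟨hab', hb'⟩ => ?_⟩
  have hb'b : EqvGen r b' b :=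
    .trans _ _ _ (.symm _ _ hab') (EqvGen.reflTransGen_le_eqvGen r _ _ hab)
  obtain ⟨d, hb'd, hbd⟩ := (equivalence_join_reflTransGen hconf).eqvGen_iff.mp
    (EqvGen.mono (fun _ y h => ⟨y, .single h, .refl⟩) _ _ hb'b)
  exact (hb'd.eq_of_forall_not hb').trans (hbd.eq_of_forall_not hb).symm

end Relation

/-- In the word `A ++ j :: (B ++ C)` the free letter `j` sits on a downslope, and its hop to the
nearest upslope of the same height carries it across the valley run `B`. -/
structure HopSite (A B C : List ℕ) (j : ℕ) : Prop where
  ne_nil : B ≠ []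
  lt_of_mem : ∀ x ∈ B, x < j
  lt_getLast : ∀ x ∈ A.getLast?, j < x
  lt_head : ∀ x ∈ C.head?, j < x

theorem hopStep_iff {v u : List ℕ} :
    hopStep v u ↔ ∃ A B C j, HopSite A B C j ∧ v = A ++ j :: (B ++ C) ∧ u = A ++ (B ++ j :: C) :=
  ⟨fun ⟨A, B, C, j, h₁, h₂, h₃, h₄, hv, hu⟩ => ⟨A, B, C, j, ⟨h₁, h₂, h₃, h₄⟩, hv, hu⟩,
    fun ⟨A, B, C, j, ⟨h₁, h₂, h₃, h₄⟩, hv, hu⟩ => ⟨A, B, C, j, h₁, h₂, h₃, h₄, hv, hu⟩⟩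

theorem HopSite.step {A B C : List ℕ} {j : ℕ} (h : HopSite A B C j) :
    hopStep (A ++ j :: (B ++ C)) (A ++ (B ++ j :: C)) :=
  hopStep_iff.mpr ⟨A, B, C, j, h, rfl, rfl⟩

theorem hopStep_lt {v u : List ℕ} (h : hopStep v u) : u < v := by
  obtain ⟨A, _ | ⟨b, B⟩, C, j, hs, rfl, rfl⟩ := hopStep_iff.mp h
  · exact absurd rfl hs.ne_nil
  · exact List.append_left_lt (List.cons_lt_cons_iff.mpr (.inl (hs.lt_of_mem b (by simp))))

/-- A run of letters below `j` ends before any letter above `j`. -/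
theorem exists_eq_append_of_append_eq {F C B' C' : List ℕ} {j : ℕ} (hB' : ∀ x ∈ B', x < j)
    (hC : ∀ x ∈ C.head?, j < x) (h : F ++ C = B' ++ C') :
    ∃ G, F = B' ++ G ∧ C' = G ++ C := by
  rcases List.append_eq_append_iff.mp h with ⟨_ | ⟨x, G⟩, hB'F, hCG⟩ | ⟨G, hF, hC'⟩
  · exact ⟨[], by simpa using hB'F.symm, by simpa using hCG.symm⟩
  · exact absurd (hB' x (by simp [hB'F])) (not_lt.mpr (hC x (by simp [hCG])).le)
  · exact ⟨G, hF, hC'⟩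

theorem HopSite.eq_of_append_eq {A A' B C B' C' : List ℕ} {j : ℕ} (h : HopSite A B C j)
    (h' : HopSite A' B' C' j) (he : B ++ C = B' ++ C') : B = B' ∧ C = C' := by
  obtain ⟨_ | ⟨g, G⟩, rfl, rfl⟩ := exists_eq_append_of_append_eq h'.lt_of_mem h.lt_head he
  · simp
  · exact absurd (h.lt_of_mem g (by simp)) (not_lt.mpr (h'.lt_head g (by simp)).le)

theorem HopSite.head?_ne {A B C B' C' : List ℕ} {j j' : ℕ} (h : HopSite A B C j)
    (h' : HopSite (A ++ j :: B) B' C' j') : C.head? ≠ some j' := by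
  intro hC
  have hbj := h.lt_of_mem _ (List.getLast_mem h.ne_nil)
  have hj'b := h'.lt_getLast (B.getLast h.ne_nil)
    (by simp [List.getLast?_cons, List.getLast?_eq_some_getLast h.ne_nil])
  have hjj' := h.lt_head j' hC
  omega

theorem HopSite.hopStep_comm {A B D B' C' : List ℕ} {c j j' : ℕ}
    (h : HopSite A B (c :: (D ++ j' :: (B' ++ C'))) j)
    (h' : HopSite (A ++ j :: (B ++ c :: D)) B' C' j') :
    ∃ z, hopStep (A ++ (B ++ j :: (c :: (D ++ j' :: (B' ++ C'))))) z ∧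
      hopStep (A ++ j :: (B ++ c :: D) ++ (B' ++ j' :: C')) z := by
  have h₁ : HopSite (A ++ B ++ j :: c :: D) B' C' j' :=
    ⟨h'.ne_nil, h'.lt_of_mem,
      fun x hx => h'.lt_getLast x (by simpa [List.getLast?_cons] using hx), h'.lt_head⟩
  have h₂ : HopSite A B (c :: (D ++ B' ++ j' :: C')) j :=
    ⟨h.ne_nil, h.lt_of_mem, h.lt_getLast, fun x hx => h.lt_head x (by simpa using hx)⟩
  exact ⟨_, by convert h₁.step using 1; simp, by convert h₂.step using 1 <;> simp⟩

theorem HopSite.hopStep_overlap {A E B' G C : List ℕ} {j j' : ℕ}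
    (h : HopSite A (E ++ j' :: (B' ++ G)) C j) (h' : HopSite (A ++ j :: E) B' (G ++ C) j') :
    ∃ z, hopStep (A ++ (E ++ j' :: (B' ++ G) ++ j :: C)) z ∧
      hopStep (A ++ j :: E ++ (B' ++ j' :: (G ++ C))) z := by
  have hj'j : j' < j := h.lt_of_mem j' (by simp)
  have h₁ : HopSite (A ++ E) B' (G ++ j :: C) j' := by
    refine ⟨h'.ne_nil, h'.lt_of_mem, fun x hx => ?_, fun x hx => ?_⟩
    · rcases E with _ | ⟨e, E⟩
      · exact hj'j.trans (h.lt_getLast x (by simpa using hx))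
      · exact h'.lt_getLast x (by simpa [List.getLast?_cons] using hx)
    · rcases G with _ | ⟨g, G⟩
      · simp only [List.nil_append, List.head?_cons, Option.mem_some_iff] at hx
        exact hx ▸ hj'j
      · exact h'.lt_head x (by simpa using hx)
  have h₂ : HopSite A (E ++ B' ++ j' :: G) C j := by
    refine ⟨by simp, fun x hx => h.lt_of_mem x ?_, h.lt_getLast, h.lt_head⟩
    simp only [List.mem_append, List.mem_cons] at hx ⊢
    tauto
  exact ⟨_, by convert h₁.step using 1; simp, by convert h₂.step using 1 <;> simp⟩

theorem HopSite.hopStep_diamond {A e B C B' C' : List ℕ} {j j' : ℕ}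
    (h : HopSite A B C j) (h' : HopSite (A ++ e) B' C' j')
    (he : j :: (B ++ C) = e ++ j' :: (B' ++ C')) :
    A ++ (B ++ j :: C) = A ++ e ++ (B' ++ j' :: C') ∨
      ∃ z, hopStep (A ++ (B ++ j :: C)) z ∧ hopStep (A ++ e ++ (B' ++ j' :: C')) z := by
  rcases e with _ | ⟨j₀, E⟩ <;> simp only [List.nil_append, List.cons_append, List.cons.injEq] at he
  · obtain ⟨rfl, he⟩ := he
    obtain ⟨rfl, rfl⟩ := h.eq_of_append_eq h' he
    simp
  obtain ⟨rfl, he⟩ := he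
  right
  rcases List.append_eq_append_iff.mp he with ⟨_ | ⟨c, D⟩, rfl, rfl⟩ | ⟨_ | ⟨j₁, F⟩, rfl, hF⟩
  · exact (h.head?_ne (by simpa using h') (by simp)).elim
  · exact h.hopStep_comm h'
  · rw [List.nil_append] at hF
    exact (h.head?_ne (by simpa using h') (by rw [← hF]; rfl)).elim
  · obtain ⟨rfl, hBF⟩ := List.cons_eq_cons.mp hF
    obtain ⟨G, rfl, rfl⟩ := exists_eq_append_of_append_eq h'.lt_of_mem
      (fun x hx => (h.lt_of_mem j' (by simp)).trans (h.lt_head x hx)) hBF.symm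
    exact h.hopStep_overlap h'

theorem hopStep_diamond {v u₁ u₂ : List ℕ} (h₁ : hopStep v u₁) (h₂ : hopStep v u₂) :
    u₁ = u₂ ∨ ∃ z, hopStep u₁ z ∧ hopStep u₂ z := by
  obtain ⟨A, B, C, j, h, rfl, rfl⟩ := hopStep_iff.mp h₁
  obtain ⟨A', B', C', j', h', hv, rfl⟩ := hopStep_iff.mp h₂
  rcases List.append_eq_append_iff.mp hv with ⟨e, rfl, he⟩ | ⟨e, rfl, he⟩
  · exact h.hopStep_diamond h' he
  · rcases h'.hopStep_diamond h he with heq | ⟨z, hz₁, hz₂⟩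
    · exact .inl heq.symm
    · exact .inr ⟨z, hz₂, hz₁⟩

theorem hopStep_perm {v u : List ℕ} (h : hopStep v u) : v.Perm u := by
  obtain ⟨A, B, C, j, -, rfl, rfl⟩ := hopStep_iff.mp h
  exact List.perm_middle.symm.append_left A

theorem exists_hopStep_of_lt {A R : List ℕ} {j b : ℕ} (hnd : (A ++ j :: b :: R).Nodup)
    (hbj : b < j) (hA : ∀ x ∈ A.getLast?, j < x) : ∃ u, hopStep (A ++ j :: b :: R) u := by
  set p : ℕ → Bool := fun x => decide (x < j)
  have hj : j ∉ b :: R := (List.nodup_cons.mp (List.nodup_append.mp hnd).2.1).1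
  have hs : HopSite A ((b :: R).takeWhile p) ((b :: R).dropWhile p) j := by
    refine ⟨by simp [p, hbj], fun x hx => by simpa [p] using List.mem_takeWhile_imp hx, hA,
      fun x hx => ?_⟩
    have hxj := List.head?_dropWhile_not p (b :: R)
    rw [Option.mem_def.mp hx] at hxj
    have hxR : x ∈ b :: R := List.dropWhile_subset p (List.mem_of_mem_head? hx)
    exact lt_of_le_of_ne (by simpa [p] using hxj) fun h => hj (h ▸ hxR)
  have := hs.step
  rw [List.takeWhile_append_dropWhile] at this
  exact ⟨_, this⟩

section Word

variable {n : ℕ}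

theorem word_nodup (u : Equiv.Perm (Fin n)) : (word n u).Nodup :=
  List.nodup_ofFn.mpr fun _ _ h => u.injective (Fin.val_injective h)

theorem word_injective : Function.Injective (word n) := fun _ _ h =>
  Equiv.ext fun i => Fin.val_injective (congrFun (List.ofFn_inj.mp h) i)

theorem ol_of_word_eq {u : Equiv.Perm (Fin n)} {A R : List ℕ} {x : ℕ}
    (h : word n u = A ++ x :: R) : ol n u A.length = x := by
  have hA : A.length < n := by
    have := congrArg List.length h
    simp only [word, List.length_ofFn, List.length_append, List.length_cons] at this
    omega
  rw [ol, dif_pos hA]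
  simpa [word, hA] using congrArg (·[A.length]?) h

theorem exists_word_eq_of_perm {x : Equiv.Perm (Fin n)} {l : List ℕ} (h : (word n x).Perm l) :
    ∃ y, word n y = l := by
  have hlen : l.length = n := by simpa [word] using h.length_eq.symm
  have hlt : ∀ a ∈ l, a < n := fun a ha => by
    obtain ⟨i, rfl⟩ := List.mem_ofFn.mp (h.mem_iff.mpr ha)
    exact (x i).isLt
  let f : Fin n → Fin n := fun i => ⟨l[(i : ℕ)], hlt _ (List.getElem_mem _)⟩
  have hf : Function.Injective f := fun i i' hii' => Fin.ext
    ((h.nodup_iff.mp (word_nodup x)).getElem_inj_iff.mp (Fin.mk.inj_iff.mp hii'))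
  refine ⟨Equiv.ofBijective f (Finite.injective_iff_bijective.mp hf), ?_⟩
  exact List.ext_getElem (by simp [word, hlen]) fun i _ _ => by simp [word, f]

end Word

theorem List.exists_eq_append_cons_cons {α : Type*} {l : List α} {i : ℕ} (h : i + 1 < l.length) :
    ∃ A x y R, l = A ++ x :: y :: R ∧ A.length = i :=
  ⟨l.take i, l[i], l[i + 1], l.drop (i + 2), by
    rw [← List.drop_eq_getElem_cons, ← List.drop_eq_getElem_cons, List.take_append_drop],
    by rw [List.length_take]; omega⟩

section Descents

variable {n : ℕ} {u : Equiv.Perm (Fin n)}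

theorem mem_DesSet {i : ℕ} : i ∈ DesSet n u ↔ i + 1 < n ∧ ol n u (i + 1) < ol n u i := by
  simp only [DesSet, Finset.mem_filter, Finset.mem_range]
  omega

theorem length_mem_DesSet_iff {A R : List ℕ} {j b : ℕ} (h : word n u = A ++ j :: b :: R) :
    A.length ∈ DesSet n u ↔ b < j := by
  have hlen := congrArg List.length h
  simp only [word, List.length_ofFn, List.length_append, List.length_cons] at hlen
  have hb : ol n u (A.length + 1) = b := by
    simpa using ol_of_word_eq (A := A ++ [j]) (by simpa using h)
  rw [mem_DesSet, ol_of_word_eq h, hb]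
  omega

theorem not_canonical_iff :
    ¬ (NoDoubleDescent n u ∧ NoInitialDescent n u) ↔
      ∃ A j b R, word n u = A ++ j :: b :: R ∧ b < j ∧ ∀ a ∈ A.getLast?, j < a := by
  constructor
  · intro h
    obtain ⟨i, hi, hleft⟩ : ∃ i ∈ DesSet n u, ∀ k, i = k + 1 → k ∈ DesSet n u := by
      by_cases hDD : NoDoubleDescent n u
      · exact ⟨0, not_not.mp fun h' => h ⟨hDD, h'⟩, by simp⟩
      · simp only [NoDoubleDescent, not_forall, not_not] at hDD
        obtain ⟨k, hk, hk₁⟩ := hDD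
        exact ⟨k + 1, hk₁, fun k' hk' => Nat.succ_injective hk' ▸ hk⟩
    obtain ⟨A, j, b, R, hw, rfl⟩ := List.exists_eq_append_cons_cons (l := word n u)
      (by simpa [word] using (mem_DesSet.mp hi).1)
    refine ⟨A, j, b, R, hw, (length_mem_DesSet_iff hw).mp hi, ?_⟩
    rcases A.eq_nil_or_concat with rfl | ⟨A', a, rfl⟩
    · simp
    · have hw' : word n u = A' ++ a :: j :: b :: R := by simpa using hw
      simpa using (length_mem_DesSet_iff hw').mp (hleft A'.length (by simp))
  · rintro ⟨A, j, b, R, hw, hbj, hA⟩ ⟨hDD, hID⟩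
    have hdes := (length_mem_DesSet_iff hw).mpr hbj
    rcases A.eq_nil_or_concat with rfl | ⟨A', a, rfl⟩
    · exact hID hdes
    · have hw' : word n u = A' ++ a :: j :: b :: R := by simpa using hw
      exact hDD _ ((length_mem_DesSet_iff hw').mpr (hA a (by simp))) (by simpa using hdes)

end Descents

def hopRel (n : ℕ) (x y : Equiv.Perm (Fin n)) : Prop := hopStep (word n x) (word n y)

section HopRel

variable {n : ℕ}

theorem wellFounded_flip_hopRel : WellFounded (flip (hopRel n)) := by
  let r : Equiv.Perm (Fin n) → Equiv.Perm (Fin n) → Prop := fun x y => word n x < word n y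
  have : IsTrans _ r := ⟨fun _ _ _ => List.lt_trans⟩
  have : Std.Irrefl r := ⟨fun _ => List.lt_irrefl _⟩
  exact Subrelation.wf (fun h => hopStep_lt h) (Finite.wellFounded_of_trans_of_irrefl r)

theorem hopRel_confluent (a b c : Equiv.Perm (Fin n)) (hab : hopRel n a b) (hac : hopRel n a c) :
    ∃ d, Relation.ReflGen (hopRel n) b d ∧ Relation.ReflTransGen (hopRel n) c d := by
  rcases hopStep_diamond hab hac with hbc | ⟨z, hbz, hcz⟩
  · exact ⟨c, word_injective hbc ▸ .refl, .refl⟩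
  · obtain ⟨d, rfl⟩ := exists_word_eq_of_perm (hopStep_perm hbz)
    exact ⟨d, .single hbz, .single hcz⟩

theorem canonical_iff_forall_not_hopRel {u : Equiv.Perm (Fin n)} :
    NoDoubleDescent n u ∧ NoInitialDescent n u ↔ ∀ y, ¬ hopRel n u y := by
  rw [← not_iff_not, not_canonical_iff, not_forall_not]
  constructor
  · rintro ⟨A, j, b, R, hw, hbj, hA⟩
    obtain ⟨l, hl⟩ := exists_hopStep_of_lt (hw ▸ word_nodup u) hbj hA
    obtain ⟨y, rfl⟩ := exists_word_eq_of_perm (hw ▸ hopStep_perm hl)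
    exact ⟨y, show hopStep (word n u) (word n y) by rwa [hw]⟩
  · rintro ⟨y, hy⟩
    obtain ⟨A, _ | ⟨b, B⟩, C, j, hs, hw, -⟩ := hopStep_iff.mp hy
    · exact absurd rfl hs.ne_nil
    · exact ⟨A, j, b, B ++ C, hw, hs.lt_of_mem b (by simp), hs.lt_getLast⟩

end HopRel

theorem hop_class_unique_canonical (n : ℕ) (w : Equiv.Perm (Fin n)) :
    ∃! u : Equiv.Perm (Fin n),
      hopEquiv n w u ∧ NoDoubleDescent n u ∧ NoInitialDescent n u := by
  simp only [canonical_iff_forall_not_hopRel]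
  exact Relation.existsUnique_eqvGen_normal wellFounded_flip_hopRel hopRel_confluent w
end
end

section
/- For K ⊆ [n-1], let K* = { n−k : k ∈ K }. The map v ↦ v*, with v*(i) = n+1−v(n+1−i), is a des-preserving bijection in the following sense: Σ_{v ∈ W(K)} t^{des(v)} = Σ_{v ∈ W(K*)} t^{des(v)}. -/
open Finset Polynomial

open scoped Classical

noncomputable section

/-! Reversing both positions and values, `w ↦ w*` is an involution of `S_n` that moves a
descent at position `i` to position `n - i`, so it preserves `des`. Since `(w*)⁻¹ = (w⁻¹)*`,
the condition `w⁻¹(k) - w⁻¹(k+1) ≤ 1` on the letters `k, k+1` of `w` is the condition on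
the letters `n-k, n-k+1` of `w*`, so `w ↦ w*` restricts to a bijection `W(K) → W(K*)`. -/

section Star

variable {n : ℕ}

lemma starPerm_apply (w : Equiv.Perm (Fin n)) (x : Fin n) :
    starPerm n w x = (w x.rev).rev := rfl

lemma starPerm_involutive : Function.Involutive (starPerm n) := fun w => by
  ext x
  simp [starPerm_apply]

lemma starPerm_inv (w : Equiv.Perm (Fin n)) : (starPerm n w)⁻¹ = starPerm n w⁻¹ := by
  ext x
  simp [starPerm, Equiv.Perm.inv_def]

lemma ol_lt (w : Equiv.Perm (Fin n)) {i : ℕ} (hi : i < n) : ol n w i < n := by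
  simp [ol, hi]

lemma ol_starPerm (w : Equiv.Perm (Fin n)) {i : ℕ} (hi : i < n) :
    ol n (starPerm n w) i = n - 1 - ol n w (n - 1 - i) := by
  have hi' : n - 1 - i < n := by omega
  have hrev : (⟨i, hi⟩ : Fin n).rev = ⟨n - 1 - i, hi'⟩ := by ext; simp; omega
  simp only [ol, dif_pos hi, dif_pos hi', starPerm_apply, hrev, Fin.val_rev]
  omega

lemma lt_of_mem_DesSet {w : Equiv.Perm (Fin n)} {i : ℕ} (h : i ∈ DesSet n w) : i < n - 1 :=
  mem_range.mp (mem_filter.mp h).1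

lemma mem_DesSet_starPerm (w : Equiv.Perm (Fin n)) {i : ℕ} (hi : i < n - 1) :
    i ∈ DesSet n (starPerm n w) ↔ n - 2 - i ∈ DesSet n w := by
  simp only [DesSet, mem_filter, mem_range, ol_starPerm w (show i < n by omega),
    ol_starPerm w (show i + 1 < n by omega), show n - 1 - (i + 1) = n - 2 - i by omega,
    show n - 1 - i = n - 2 - i + 1 by omega]
  have := ol_lt w (i := n - 2 - i) (by omega)
  have := ol_lt w (i := n - 2 - i + 1) (by omega)
  omega

lemma des_starPerm (w : Equiv.Perm (Fin n)) : des n (starPerm n w) = des n w := by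
  refine card_nbij' (n - 2 - ·) (n - 2 - ·) (fun i hi => ?_) (fun i hi => ?_)
    (fun i hi => ?_) (fun i hi => ?_) <;> have := lt_of_mem_DesSet hi <;> beta_reduce
  · exact (mem_DesSet_starPerm w this).mp hi
  · rwa [mem_coe, mem_DesSet_starPerm w (by omega), show n - 2 - (n - 2 - i) = i by omega]
  all_goals omega

lemma starPerm_inv_val (w : Equiv.Perm (Fin n)) (x : Fin n) :
    ((starPerm n w)⁻¹ x : ℕ) = n - 1 - (w⁻¹ x.rev : ℕ) := by
  rw [starPerm_inv, starPerm_apply, Fin.val_rev]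
  omega

lemma starPerm_mem_Wset_image_iff {K : Finset ℕ} {w : Equiv.Perm (Fin n)} :
    starPerm n w ∈ Wset n (K.image (n - ·)) ↔ w ∈ Wset n K := by
  simp only [Wset, mem_filter, mem_univ, true_and, forall_mem_image]
  refine forall₂_congr fun k _ => ?_
  -- Indices `k = 0` and `k ≥ n` impose no condition, on either side.
  rcases Nat.eq_zero_or_pos k with rfl | hk1
  · simp
  rcases lt_or_ge k n with hkn | hnk
  · have hrev₁ : (⟨n - k - 1, by omega⟩ : Fin n).rev = ⟨k, hkn⟩ := by ext; simp; omega
    have hrev₂ : (⟨n - k, by omega⟩ : Fin n).rev = ⟨k - 1, by omega⟩ := by ext; simp; omega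
    simp only [starPerm_inv_val, hrev₁, hrev₂, show n - k < n by omega, hkn, forall_true_left]
    have := (w⁻¹ ⟨k, hkn⟩).is_lt
    have := (w⁻¹ ⟨k - 1, by omega⟩).is_lt
    omega
  · simp [show n - k = 0 by omega, hnk.not_gt]

end Star

theorem Wset_star_sum_general (n : ℕ) (K : Finset ℕ) :
    ∑ v ∈ Wset n K, (X : Polynomial ℕ) ^ des n v =
      ∑ v ∈ Wset n (K.image fun k => n - k), (X : Polynomial ℕ) ^ des n v :=
  sum_equiv starPerm_involutive.toPerm (fun _ => starPerm_mem_Wset_image_iff.symm)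
    fun v _ => by rw [Function.Involutive.coe_toPerm, des_starPerm]

theorem Wset_star_sum (n : ℕ) (K : Finset ℕ)
    (hK : ∀ k ∈ K, 1 ≤ k ∧ k ≤ n - 1) :
    ∑ v ∈ Wset n K, (X : Polynomial ℕ) ^ des n v =
      ∑ v ∈ Wset n (K.image fun k => n - k), (X : Polynomial ℕ) ^ des n v :=
  Wset_star_sum_general n K
end
end
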